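/- Let k ≥ 3 be an integer and let S^2_{P_k} be the generalized Sierpiński graph of the path P_k of dimension 2. Then χρ(S^2_{P_3}) = 3, and χρ(S^2_{P_k}) = 4 for every k ≥ 4. -/

import Mathlib

open SimpleGraph

/-- The generalized Sierpiński graph `S^n_G` of a graph `G` on vertex set `[k]`:
vertices are words of length `n` over `[k]`, and distinct words `u`, `v` are adjacent
iff there is an index `i` such that `u j = v j` for `j < i`, `u i v i` is an edge of `G`,
and `u j = v i`, `v j = u i` for all `j > i`. -/
def sierpinskiGraph {k : ℕ} (G : SimpleGraph (Fin k)) (n : ℕ) :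
    SimpleGraph (Fin n → Fin k) where
  Adj u v := ∃ i : Fin n,
      (∀ j, j < i → u j = v j) ∧ G.Adj (u i) (v i) ∧
      (∀ j, i < j → u j = v i ∧ v j = u i)
  symm := by
    constructor
    rintro u v ⟨i, h1, h2, h3⟩
    exact ⟨i, fun j hj => (h1 j hj).symm, h2.symm,
      fun j hj => ⟨(h3 j hj).2, (h3 j hj).1⟩⟩
  loopless := by
    constructor
    rintro u ⟨i, _, h2, _⟩
    exact G.loopless.irrefl _ h2

/-- `f` is a packing `c`-coloring of `H`: colors lie in `{1, …, c}` and any two distinct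
vertices of the same color `t` are at (extended) distance greater than `t`. -/
def IsPackingColoring {V : Type*} (H : SimpleGraph V) (f : V → ℕ) (c : ℕ) : Prop :=
  (∀ v, 1 ≤ f v ∧ f v ≤ c) ∧
    ∀ u v, u ≠ v → f u = f v → (f u : ℕ∞) < H.edist u v

/-- The packing chromatic number of `H`: the least `c` admitting a packing `c`-coloring. -/
noncomputable def packingChromaticNumber {V : Type*} (H : SimpleGraph V) : ℕ :=
  sInf {c | ∃ f : V → ℕ, IsPackingColoring H f c}

/-!
A word `ax` of `S^2_{P_k}` lies in copy `a`; inside a copy the edges are those of `P_k` on the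
last letter, and copies `a` and `a + 1` are joined only by the bridge `a(a+1) – (a+1)a`. Any walk
between two copies must cross every copy in between, entering and leaving it through its bridge
words, which gives an explicit lower bound on distances (`pathSierpinskiDist`). Checking explicit
colourings against it is then arithmetic: colour 1 on even last letters, and, for `k ≥ 4`,
colour 4 on the words `aa` with `a` odd and 2, 3 alternating on the rest. For the lower bounds,
`S^2_{P_2}` is a path on four vertices, which has no packing 2-colouring, and `S^2_{P_4}` contains
a caterpillar with no packing 3-colouring; both embed into `S^2_{P_k}` for larger `k`.
-/

namespace SimpleGraph

variable {V W : Type*} {G : SimpleGraph V}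

lemma edist_le_two {u v w : V} (huv : G.Adj u v) (hvw : G.Adj v w) : G.edist u w ≤ 2 :=
  (Walk.cons huv hvw.toWalk).edist_le

lemma edist_le_three {u v w x : V} (huv : G.Adj u v) (hvw : G.Adj v w) (hwx : G.Adj w x) :
    G.edist u x ≤ 3 :=
  (Walk.cons huv (Walk.cons hvw hwx.toWalk)).edist_le

lemma Walk.apply_le_apply_add_length (g : V → ℕ) (hg : ∀ v w, G.Adj v w → g w ≤ g v + 1)
    {u v : V} (p : G.Walk u v) : g v ≤ g u + p.length := by
  induction p with
  | nil => simp
  | cons h _ ih => have := hg _ _ h; simp only [Walk.length_cons]; omega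

lemma apply_le_apply_add_edist (g : V → ℕ) (hg : ∀ v w, G.Adj v w → g w ≤ g v + 1)
    (u v : V) : (g v : ℕ∞) ≤ g u + G.edist u v := by
  by_cases hr : G.Reachable u v
  · obtain ⟨p, hp⟩ := hr.exists_walk_length_eq_edist
    rw [← hp]
    exact_mod_cast p.apply_le_apply_add_length g hg
  · simp [edist_eq_top_of_not_reachable hr]

lemma Hom.edist_le {H : SimpleGraph W} (φ : G →g H) (u v : V) :
    H.edist (φ u) (φ v) ≤ G.edist u v := by
  by_cases hr : G.Reachable u v
  · obtain ⟨p, hp⟩ := hr.exists_walk_length_eq_edist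
    rw [← hp, ← p.length_map φ]
    exact (p.map φ).edist_le
  · simp [edist_eq_top_of_not_reachable hr]

end SimpleGraph

section PackingColoring

variable {V W : Type*} {G : SimpleGraph V} {H : SimpleGraph W} {f : W → ℕ} {c : ℕ}

lemma IsPackingColoring.mono (hf : IsPackingColoring H f c) {c' : ℕ} (hc : c ≤ c') :
    IsPackingColoring H f c' :=
  ⟨fun v => ⟨(hf.1 v).1, (hf.1 v).2.trans hc⟩, hf.2⟩

lemma IsPackingColoring.lt_of_edist_le (hf : IsPackingColoring H f c) {u v : W} {d : ℕ}
    (huv : u ≠ v) (hd : H.edist u v ≤ d) (he : f u = f v) : f u < d :=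
  ENat.natCast_lt_natCast.mp ((hf.2 u v huv he).trans_le hd)

lemma IsPackingColoring.ne_of_adj (hf : IsPackingColoring H f c) {u v : W} (h : H.Adj u v) :
    f u ≠ f v := fun he =>
  (hf.lt_of_edist_le h.ne (edist_eq_one_iff_adj.2 h).le he).not_ge (hf.1 u).1

lemma IsPackingColoring.ne_one_of_adj_of_adj_of_adj (hf : IsPackingColoring H f 3)
    {v x y z : W} (hx : H.Adj v x) (hy : H.Adj v y) (hz : H.Adj v z)
    (hxy : x ≠ y) (hxz : x ≠ z) (hyz : y ≠ z) : f v ≠ 1 := by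
  have := hf.ne_of_adj hx
  have := hf.ne_of_adj hy
  have := hf.ne_of_adj hz
  have := hf.lt_of_edist_le (d := 2) hxy (edist_le_two hx.symm hy)
  have := hf.lt_of_edist_le (d := 2) hxz (edist_le_two hx.symm hz)
  have := hf.lt_of_edist_le (d := 2) hyz (edist_le_two hy.symm hz)
  have := hf.1 x
  have := hf.1 y
  have := hf.1 z
  omega

lemma IsPackingColoring.eq_one_of_adj_of_adj_of_adj (hf : IsPackingColoring H f 3)
    {v x y z : W} (hx : H.Adj v x) (hy : H.Adj v y) (hz : H.Adj v z)
    (hxy : x ≠ y) (hxz : x ≠ z) (hyz : y ≠ z) (hx1 : f x ≠ 1) : f y = 1 := by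
  have := hf.ne_one_of_adj_of_adj_of_adj hx hy hz hxy hxz hyz
  have := hf.ne_of_adj hx
  have := hf.ne_of_adj hy
  have := hf.lt_of_edist_le (d := 2) hxy (edist_le_two hx.symm hy)
  have := hf.1 v
  have := hf.1 x
  have := hf.1 y
  omega

lemma IsPackingColoring.comp_copy (hf : IsPackingColoring H f c) (φ : G.Copy H) :
    IsPackingColoring G (f ∘ φ) c :=
  ⟨fun v => hf.1 (φ v), fun u v huv he =>
    (hf.2 _ _ (φ.injective.ne huv) he).trans_le (φ.toHom.edist_le u v)⟩

lemma packingChromaticNumber_eq_succ (hc : ∃ f, IsPackingColoring H f (c + 1))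
    (hc' : ∀ f, ¬ IsPackingColoring H f c) : packingChromaticNumber H = c + 1 := by
  refine le_antisymm (Nat.sInf_le hc) (le_csInf ⟨c + 1, hc⟩ ?_)
  rintro c' ⟨f, hf⟩
  by_contra! hlt
  exact hc' f (hf.mono (Nat.le_of_lt_succ hlt))

end PackingColoring

section Sierpinski

variable {k : ℕ} {G : SimpleGraph (Fin k)}

lemma sierpinskiGraph_two_adj_iff {u v : Fin 2 → Fin k} :
    (sierpinskiGraph G 2).Adj u v ↔
      (u 0 = v 0 ∧ G.Adj (u 1) (v 1)) ∨ (G.Adj (u 0) (v 0) ∧ u 1 = v 0 ∧ v 1 = u 0) := by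
  constructor
  · rintro ⟨i, hlt, hadj, hgt⟩
    fin_cases i
    · exact Or.inr ⟨hadj, hgt 1 (by decide)⟩
    · exact Or.inl ⟨hlt 0 (by decide), hadj⟩
  · rintro (⟨h0, h1⟩ | ⟨h0, h1⟩)
    · exact ⟨1, fun j hj => by fin_cases j <;> simp_all, h1,
        fun j hj => by fin_cases j <;> simp_all⟩
    · exact ⟨0, fun j hj => by fin_cases j <;> simp_all, h0,
        fun j hj => by fin_cases j <;> simp_all⟩

lemma sierpinskiGraph_two_adj_within (a : Fin k) {x y : Fin k} (h : G.Adj x y) :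
    (sierpinskiGraph G 2).Adj ![a, x] ![a, y] :=
  sierpinskiGraph_two_adj_iff.2 (Or.inl ⟨rfl, h⟩)

lemma sierpinskiGraph_two_adj_swap {a c : Fin k} (h : G.Adj a c) :
    (sierpinskiGraph G 2).Adj ![a, c] ![c, a] :=
  sierpinskiGraph_two_adj_iff.2 (Or.inr ⟨h, rfl, rfl⟩)

def SimpleGraph.Copy.sierpinskiGraph {m : ℕ} {G' : SimpleGraph (Fin m)} (φ : G.Copy G')
    (n : ℕ) :
    (_root_.sierpinskiGraph G n).Copy (_root_.sierpinskiGraph G' n) where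
  toHom :=
    { toFun := fun u => φ ∘ u
      map_rel' := fun ⟨i, hlt, hadj, hgt⟩ =>
        ⟨i, fun j hj => congrArg φ (hlt j hj), φ.toHom.map_adj hadj,
          fun j hj => ⟨congrArg φ (hgt j hj).1, congrArg φ (hgt j hj).2⟩⟩ }
  injective' := fun _ _ h => funext fun i => φ.injective (congrFun h i)

end Sierpinski

def SimpleGraph.Copy.pathGraphOfLE {m k : ℕ} (h : m ≤ k) :
    (pathGraph m).Copy (pathGraph k) where
  toHom :=
    { toFun := Fin.castLE h
      map_rel' := fun hadj => by simpa [pathGraph_adj] using hadj }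
  injective' := Fin.castLE_injective h

section PathSierpinski

/-- The length of the walk from `ax` to `cz` in `S^2_{P_k}` that passes through the copies
`a, a ± 1, …, c` in turn, entering and leaving copy `b` through the words `b(b ± 1)`. -/
def pathSierpinskiDist (a x c z : ℕ) : ℕ :=
  if a = c then Nat.dist x z
  else if a < c then Nat.dist x (a + 1) + Nat.dist z (c - 1) + (3 * (c - a) - 2)
  else Nat.dist z (c + 1) + Nat.dist x (a - 1) + (3 * (a - c) - 2)

variable {k : ℕ}

lemma pathSierpinskiDist_le_of_within (a x c z z' : ℕ) (h : z + 1 = z' ∨ z' + 1 = z) :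
    pathSierpinskiDist a x c z' ≤ pathSierpinskiDist a x c z + 1 := by
  unfold pathSierpinskiDist Nat.dist
  split_ifs <;> omega

lemma pathSierpinskiDist_le_of_swap (a x c z : ℕ) (h : c + 1 = z ∨ z + 1 = c) :
    pathSierpinskiDist a x z c ≤ pathSierpinskiDist a x c z + 1 := by
  unfold pathSierpinskiDist Nat.dist
  split_ifs <;> omega

lemma pathSierpinskiDist_le_of_adj (u : Fin 2 → Fin k) {v w : Fin 2 → Fin k}
    (h : (sierpinskiGraph (pathGraph k) 2).Adj v w) :
    pathSierpinskiDist (u 0) (u 1) (w 0) (w 1) ≤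
      pathSierpinskiDist (u 0) (u 1) (v 0) (v 1) + 1 := by
  rcases sierpinskiGraph_two_adj_iff.1 h with ⟨h0, h1⟩ | ⟨h0, h1, h2⟩
  · rw [← h0]
    exact pathSierpinskiDist_le_of_within _ _ _ _ _ (pathGraph_adj.1 h1)
  · rw [← h1] at h0
    rw [← h1, h2]
    exact pathSierpinskiDist_le_of_swap _ _ _ _ (pathGraph_adj.1 h0)

lemma pathSierpinskiDist_le_edist (u v : Fin 2 → Fin k) :
    (pathSierpinskiDist (u 0) (u 1) (v 0) (v 1) : ℕ∞) ≤
      (sierpinskiGraph (pathGraph k) 2).edist u v := by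
  simpa [pathSierpinskiDist, Nat.dist] using
    apply_le_apply_add_edist _ (fun _ _ => pathSierpinskiDist_le_of_adj u) u v

lemma pathSierpinskiDist_comm (a x c z : ℕ) :
    pathSierpinskiDist a x c z = pathSierpinskiDist c z a x := by
  unfold pathSierpinskiDist Nat.dist
  split_ifs <;> omega

lemma isPackingColoring_of_lt_pathSierpinskiDist (f : ℕ → ℕ → ℕ) (c : ℕ)
    (hf : ∀ a x, a < k → x < k → 1 ≤ f a x ∧ f a x ≤ c)
    (hwithin : ∀ a x z, a < k → x < k → z < k → x ≠ z → f a x = f a z →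
      f a x < Nat.dist x z)
    (hacross : ∀ a x b z, a < b → b < k → x < k → z < k → f a x = f b z →
      f a x < Nat.dist x (a + 1) + Nat.dist z (b - 1) + (3 * (b - a) - 2)) :
    IsPackingColoring (sierpinskiGraph (pathGraph k) 2) (fun u => f (u 0) (u 1)) c := by
  refine ⟨fun v => hf _ _ (v 0).2 (v 1).2, fun u v huv he => ?_⟩
  refine (ENat.natCast_lt_natCast.2 ?_).trans_le (pathSierpinskiDist_le_edist u v)
  rcases lt_trichotomy (u 0 : ℕ) (v 0) with h | h | h
  · simpa [pathSierpinskiDist, h, h.ne] using hacross _ _ _ _ h (v 0).2 (u 1).2 (v 1).2 he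
  · have h1 : (u 1 : ℕ) ≠ v 1 := fun h1 =>
      huv (funext fun i => by fin_cases i <;> exact Fin.ext (by simp [h, h1]))
    simpa [pathSierpinskiDist, h] using
      hwithin _ _ _ (u 0).2 (u 1).2 (v 1).2 h1 (by simpa [h] using he)
  · rw [pathSierpinskiDist_comm, he]
    simpa [pathSierpinskiDist, h, h.ne] using hacross _ _ _ _ h (u 0).2 (v 1).2 (u 1).2 he.symm

end PathSierpinski

def threeColoring (a x : ℕ) : ℕ := if x % 2 = 0 then 1 else if a = 1 then 3 else 2

def fourColoring (a x : ℕ) : ℕ :=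
  if x % 2 = 0 then 1
  else if a % 2 = 0 then (if (x + 3 * a) % 4 = 1 then 3 else 2)
  else if x = a then 4
  else if a < x then (if (x - a) % 4 = 2 then 3 else 2)
  else (if (a - x) % 4 = 0 then 3 else 2)

lemma isPackingColoring_threeColoring :
    IsPackingColoring (sierpinskiGraph (pathGraph 3) 2)
      (fun u => threeColoring (u 0) (u 1)) 3 := by
  refine isPackingColoring_of_lt_pathSierpinskiDist _ _ (fun a x _ _ => ?_)
    (fun a x z _ _ _ _ _ => ?_) fun a x b z _ _ _ _ _ => ?_ <;>
  · simp only [threeColoring, Nat.dist] at *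
    split_ifs at * <;> omega

lemma fourColoring_lt_dist {a x z : ℕ} (hne : x ≠ z)
    (he : fourColoring a x = fourColoring a z) :
    fourColoring a x < Nat.dist x z := by
  unfold fourColoring Nat.dist at *
  split_ifs at * <;> omega

lemma fourColoring_lt_of_lt {a x b z : ℕ} (hab : a < b)
    (he : fourColoring a x = fourColoring b z) :
    fourColoring a x < Nat.dist x (a + 1) + Nat.dist z (b - 1) + (3 * (b - a) - 2) := by
  unfold fourColoring Nat.dist at *
  split_ifs at * <;> omega

lemma isPackingColoring_fourColoring (k : ℕ) :
    IsPackingColoring (sierpinskiGraph (pathGraph k) 2) (fun u => fourColoring (u 0) (u 1)) 4 :=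
  isPackingColoring_of_lt_pathSierpinskiDist _ _
    (fun a x _ _ => by unfold fourColoring; split_ifs <;> omega)
    (fun _ _ _ _ _ _ => fourColoring_lt_dist) fun _ _ _ _ hab _ _ _ => fourColoring_lt_of_lt hab

lemma not_isPackingColoring_sierpinskiGraph_pathGraph_two (f : (Fin 2 → Fin 2) → ℕ) :
    ¬ IsPackingColoring (sierpinskiGraph (pathGraph 2) 2) f 2 := by
  intro hf
  have p01 : (pathGraph 2).Adj 0 1 := by simp [pathGraph_adj]
  have e₁ := sierpinskiGraph_two_adj_within 0 p01
  have e₂ := sierpinskiGraph_two_adj_swap p01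
  have e₃ := sierpinskiGraph_two_adj_within 1 p01
  have := hf.ne_of_adj e₁
  have := hf.ne_of_adj e₂
  have := hf.ne_of_adj e₃
  have := hf.lt_of_edist_le (d := 2) (by decide) (edist_le_two e₁ e₂)
  have := hf.lt_of_edist_le (d := 2) (by decide) (edist_le_two e₂ e₃)
  have := hf.1 ![0, 0]
  have := hf.1 ![0, 1]
  have := hf.1 ![1, 0]
  have := hf.1 ![1, 1]
  omega

/-- Both centres `12` and `21` of the caterpillar spanned by the words `1x` and `2x` have three
neighbours, so neither is coloured 1 while `11` and `22` are. Hence `{f 12, f 21} = {2, 3}`, and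
the leaf `10` or `23` at distance 2 from the centre coloured 2 and 3 from the one coloured 3
has no colour left. -/
lemma not_isPackingColoring_sierpinskiGraph_pathGraph_four (f : (Fin 2 → Fin 4) → ℕ) :
    ¬ IsPackingColoring (sierpinskiGraph (pathGraph 4) 2) f 3 := by
  intro hf
  have p01 : (pathGraph 4).Adj 0 1 := by simp [pathGraph_adj]
  have p12 : (pathGraph 4).Adj 1 2 := by simp [pathGraph_adj]
  have p23 : (pathGraph 4).Adj 2 3 := by simp [pathGraph_adj]
  have e₁ := sierpinskiGraph_two_adj_within 1 p01
  have e₂ := sierpinskiGraph_two_adj_within 1 p12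
  have e₃ := sierpinskiGraph_two_adj_within 1 p23
  have e₄ := sierpinskiGraph_two_adj_swap p12
  have e₅ := sierpinskiGraph_two_adj_within 2 p01
  have e₆ := sierpinskiGraph_two_adj_within 2 p12
  have e₇ := sierpinskiGraph_two_adj_within 2 p23
  have h12 := hf.ne_one_of_adj_of_adj_of_adj e₂.symm e₃ e₄ (by decide) (by decide) (by decide)
  have h21 :=
    hf.ne_one_of_adj_of_adj_of_adj e₅.symm e₆ e₄.symm (by decide) (by decide) (by decide)
  have h11 :=
    hf.eq_one_of_adj_of_adj_of_adj e₄ e₂.symm e₃ (by decide) (by decide) (by decide) h21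
  have h22 :=
    hf.eq_one_of_adj_of_adj_of_adj e₄.symm e₆ e₅.symm (by decide) (by decide) (by decide) h12
  have := hf.ne_of_adj e₁
  have := hf.ne_of_adj e₄
  have := hf.ne_of_adj e₇
  have := hf.lt_of_edist_le (d := 2) (by decide) (edist_le_two e₁ e₂)
  have := hf.lt_of_edist_le (d := 3) (by decide) (edist_le_three e₁ e₂ e₄)
  have := hf.lt_of_edist_le (d := 2) (by decide) (edist_le_two e₇.symm e₆.symm)
  have := hf.lt_of_edist_le (d := 3) (by decide) (edist_le_three e₇.symm e₆.symm e₄.symm)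
  have := hf.1 ![1, 0]
  have := hf.1 ![1, 2]
  have := hf.1 ![2, 1]
  have := hf.1 ![2, 3]
  omega

theorem stmt5 :
    packingChromaticNumber (sierpinskiGraph (SimpleGraph.pathGraph 3) 2) = 3 ∧
    ∀ k : ℕ, 4 ≤ k →
      packingChromaticNumber (sierpinskiGraph (SimpleGraph.pathGraph k) 2) = 4 := by
  refine ⟨packingChromaticNumber_eq_succ ⟨_, isPackingColoring_threeColoring⟩ fun f hf => ?_,
    fun k hk =>
      packingChromaticNumber_eq_succ ⟨_, isPackingColoring_fourColoring k⟩ fun f hf => ?_⟩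
  · exact not_isPackingColoring_sierpinskiGraph_pathGraph_two _
      (hf.comp_copy ((Copy.pathGraphOfLE (by norm_num)).sierpinskiGraph 2))
  · exact not_isPackingColoring_sierpinskiGraph_pathGraph_four _
      (hf.comp_copy ((Copy.pathGraphOfLE hk).sierpinskiGraph 2))
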